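/- Let r, s ≥ 1 and set r′ = r(r+1)/2 and s′ = s(s+1)/2. Index the rows of an r′×s′ matrix by the indices 1 ≤ i ≤ r together with the pairs (i,j) with 1 ≤ i < j ≤ r, and the columns by the indices 1 ≤ k ≤ s together with the pairs (k,l) with 1 ≤ k < l ≤ s. Define f : M(r×s, ℂ) → M(r′×s′, ℂ) by: f(Z)_{i,k} = z_{ik}², f(Z)_{(i,j),k} = √2 z_{ik} z_{jk}, f(Z)_{i,(k,l)} = √2 z_{ik} z_{il}, and f(Z)_{(i,j),(k,l)} = z_{ik} z_{jl} + z_{jk} z_{il}. Then f maps Ω_{r,s} into Ω_{r′,s′}, and the restriction f : Ω_{r,s} → Ω_{r′,s′} is a proper map, i.e., the preimage under f of every compact subset of Ω_{r′,s′} is compact. -/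

import Mathlib

/-!
`f(Z)` is the matrix of the symmetric square `Sym² Z : Sym² ℂˢ → Sym² ℂʳ` in orthonormal bases,
so `f` is multiplicative and commutes with `ᴴ`, and `f(Z) f(Z)ᴴ = f(Z Zᴴ)`. Diagonalising
`Z Zᴴ = U diag(λ) Uᴴ` with `U` unitary and `λᵢ ≥ 0` gives `f(Z Zᴴ) = f(U) diag(λᵢ², λᵢλⱼ) f(U)ᴴ`
with `f(U)` unitary, and all `λᵢ²`, `λᵢλⱼ` are `< 1` iff all `λᵢ < 1`. Hence `f(Z) ∈ Ω_{r′,s′}`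
iff `Z ∈ Ω_{r,s}`. For compact `K ⊆ Ω_{r′,s′}` the preimage in `Ω_{r,s}` is therefore the full
preimage `f⁻¹ K`, which is closed and lies in the bounded set `Ω_{r,s}`.
-/

open Matrix
open scoped ComplexOrder

/-- The type I bounded symmetric domain `Ω` for matrices indexed by arbitrary finite
types (for `m = Fin r`, `n = Fin s` this is the usual `Ω_{r,s}`). -/
def OmegaI (m n : Type*) [Fintype m] [DecidableEq m] [Fintype n] :
    Set (Matrix m n ℂ) :=
  {Z | (1 - Z * Zᴴ).PosDef}

abbrev StrictPairs (α : Type*) [LT α] := {p : α × α // p.1 < p.2}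

def diagSumStrictPairsEquivProd (m : Type*) [LinearOrder m] :
    m ⊕ (StrictPairs m ⊕ StrictPairs m) ≃ m × m where
  toFun := Sum.elim (fun i => (i, i)) (Sum.elim (·.1) (·.1.swap))
  invFun q :=
    if h : q.1 < q.2 then Sum.inr (Sum.inl ⟨q, h⟩)
    else if h' : q.2 < q.1 then Sum.inr (Sum.inr ⟨q.swap, h'⟩)
    else Sum.inl q.1
  left_inv := by
    rintro (i | ⟨⟨a, b⟩, h⟩ | ⟨⟨a, b⟩, h⟩)
    · simp
    · simp [h]
    · simp [h, lt_asymm h]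
  right_inv := by
    rintro ⟨a, b⟩
    dsimp only
    split_ifs with h h'
    · rfl
    · rfl
    · obtain rfl := le_antisymm (not_lt.1 h') (not_lt.1 h)
      rfl

theorem sum_prod_eq_sum_diag_add_sum_strictPairs {m R : Type*} [Fintype m] [LinearOrder m]
    [AddCommMonoid R] (g : m × m → R) :
    ∑ q, g q = ∑ i, g (i, i) + ∑ p : StrictPairs m, (g p.1 + g p.1.swap) := by
  rw [← (diagSumStrictPairsEquivProd m).sum_comp, Fintype.sum_sum_type, Fintype.sum_sum_type,
    ← Finset.sum_add_distrib]
  rfl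

theorem sum_mul_sum_eq_sum_add_sum_strictPairs {m R : Type*} [Fintype m] [LinearOrder m]
    [NonUnitalNonAssocSemiring R] (a b : m → R) :
    (∑ j, a j) * (∑ j, b j) =
      ∑ j, a j * b j + ∑ p : StrictPairs m, (a p.1.1 * b p.1.2 + a p.1.2 * b p.1.1) := by
  rw [Finset.sum_mul_sum, ← Finset.sum_product', Finset.univ_product_univ]
  exact sum_prod_eq_sum_diag_add_sum_strictPairs fun q => a q.1 * b q.2

def diagSumStrictPairsEquivLEPairs (m : Type*) [LinearOrder m] :
    m ⊕ StrictPairs m ≃ {p : m × m // p.1 ≤ p.2} where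
  toFun := Sum.elim (fun i => ⟨(i, i), le_rfl⟩) (fun p => ⟨p.1, p.2.le⟩)
  invFun q := if h : q.1.1 < q.1.2 then Sum.inr ⟨q.1, h⟩ else Sum.inl q.1.1
  left_inv := by
    rintro (i | ⟨⟨a, b⟩, h⟩)
    · simp
    · simp [h]
  right_inv := by
    rintro ⟨⟨a, b⟩, h⟩
    dsimp only
    split_ifs with h'
    · rfl
    · obtain rfl : a = b := le_antisymm h (not_lt.1 h')
      rfl

theorem card_sum_strictPairs (m : Type*) [Fintype m] [LinearOrder m] :
    Fintype.card (m ⊕ StrictPairs m) = Fintype.card m * (Fintype.card m + 1) / 2 := by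
  rw [Fintype.card_congr ((diagSumStrictPairsEquivLEPairs m).trans Sym2.sortEquiv.symm),
    Sym2.card, Nat.choose_two_right, Nat.add_sub_cancel, Nat.mul_comm]

section SymSq

variable {l m n : Type*} [LinearOrder l] [LinearOrder m] [LinearOrder n]

/-- The matrix of `Sym² A` in the orthonormal bases `eᵢ ⊗ eᵢ`, `(eᵢ ⊗ eⱼ + eⱼ ⊗ eᵢ) / √2`
(`i < j`); hence the factors `√2`. -/
noncomputable def symSq (A : Matrix m n ℂ) : Matrix (m ⊕ StrictPairs m) (n ⊕ StrictPairs n) ℂ :=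
  Matrix.of fun
    | .inl i, .inl k => A i k ^ 2
    | .inr p, .inl k => (Real.sqrt 2 : ℂ) * (A p.1.1 k * A p.1.2 k)
    | .inl i, .inr q => (Real.sqrt 2 : ℂ) * (A i q.1.1 * A i q.1.2)
    | .inr p, .inr q => A p.1.1 q.1.1 * A p.1.2 q.1.2 + A p.1.2 q.1.1 * A p.1.1 q.1.2

@[simp] theorem symSq_inl_inl (A : Matrix m n ℂ) (i : m) (k : n) :
    symSq A (.inl i) (.inl k) = A i k ^ 2 := rfl

@[simp] theorem symSq_inr_inl (A : Matrix m n ℂ) (p : StrictPairs m) (k : n) :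
    symSq A (.inr p) (.inl k) = (Real.sqrt 2 : ℂ) * (A p.1.1 k * A p.1.2 k) := rfl

@[simp] theorem symSq_inl_inr (A : Matrix m n ℂ) (i : m) (q : StrictPairs n) :
    symSq A (.inl i) (.inr q) = (Real.sqrt 2 : ℂ) * (A i q.1.1 * A i q.1.2) := rfl

@[simp] theorem symSq_inr_inr (A : Matrix m n ℂ) (p : StrictPairs m) (q : StrictPairs n) :
    symSq A (.inr p) (.inr q) =
      A p.1.1 q.1.1 * A p.1.2 q.1.2 + A p.1.2 q.1.1 * A p.1.1 q.1.2 := rfl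

theorem continuous_symSq : Continuous (symSq : Matrix m n ℂ → _) :=
  continuous_matrix fun
    | .inl _, .inl _ => by simp only [symSq_inl_inl]; fun_prop
    | .inr _, .inl _ => by simp only [symSq_inr_inl]; fun_prop
    | .inl _, .inr _ => by simp only [symSq_inl_inr]; fun_prop
    | .inr _, .inr _ => by simp only [symSq_inr_inr]; fun_prop

theorem symSq_conjTranspose (A : Matrix m n ℂ) : symSq Aᴴ = (symSq A)ᴴ := by
  ext (_ | _) (_ | _) <;> simp [mul_comm]

theorem ofReal_sqrt_two_mul_self : (Real.sqrt 2 : ℂ) * (Real.sqrt 2 : ℂ) = 2 := by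
  rw [← Complex.ofReal_mul, Real.mul_self_sqrt zero_le_two, Complex.ofReal_ofNat]

theorem symSq_mul [Fintype n] (A : Matrix l n ℂ) (B : Matrix n m ℂ) :
    symSq A * symSq B = symSq (A * B) := by
  have h2 := ofReal_sqrt_two_mul_self
  ext (i | p) (k | q) <;>
    simp only [mul_apply, Fintype.sum_sum_type, symSq_inl_inl, symSq_inr_inl, symSq_inl_inr,
      symSq_inr_inr]
  · rw [sq, sum_mul_sum_eq_sum_add_sum_strictPairs]
    congr 1
    · exact Finset.sum_congr rfl fun j _ => by ring
    · exact Finset.sum_congr rfl fun t _ => by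
        linear_combination (A i t.1.1 * A i t.1.2 * B t.1.1 k * B t.1.2 k) * h2
  · rw [sum_mul_sum_eq_sum_add_sum_strictPairs, mul_add, Finset.mul_sum, Finset.mul_sum]
    congr 1 <;> exact Finset.sum_congr rfl fun j _ => by ring
  · rw [sum_mul_sum_eq_sum_add_sum_strictPairs, mul_add, Finset.mul_sum, Finset.mul_sum]
    congr 1 <;> exact Finset.sum_congr rfl fun j _ => by ring
  · rw [sum_mul_sum_eq_sum_add_sum_strictPairs, sum_mul_sum_eq_sum_add_sum_strictPairs,
      add_add_add_comm, ← Finset.sum_add_distrib, ← Finset.sum_add_distrib]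
    congr 1
    · exact Finset.sum_congr rfl fun j _ => by
        linear_combination (A p.1.1 j * A p.1.2 j * B j q.1.1 * B j q.1.2) * h2
    · exact Finset.sum_congr rfl fun t _ => by ring

theorem symSq_diagonal [DecidableEq m] (d : m → ℂ) :
    symSq (diagonal d) =
      diagonal (Sum.elim (fun i => d i ^ 2) (fun p : StrictPairs m => d p.1.1 * d p.1.2)) := by
  ext (i | ⟨⟨a, b⟩, hab⟩) (k | ⟨⟨c, e⟩, hce⟩)
  · by_cases h : i = k <;> simp [h]
  · simp only [symSq_inl_inr, diagonal_apply, reduceCtorEq, if_false]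
    grind
  · simp only [symSq_inr_inl, diagonal_apply, reduceCtorEq, if_false]
    grind
  · simp only [symSq_inr_inr, diagonal_apply, Sum.inr.injEq, Subtype.mk.injEq, Prod.mk.injEq]
    grind

theorem symSq_one : symSq (1 : Matrix m m ℂ) = 1 := by
  rw [← diagonal_one, symSq_diagonal, ← diagonal_one]
  congr 1
  ext (_ | _) <;> simp

theorem posDef_one_sub_symSq_diagonal_iff (d : m → ℝ) (hd : 0 ≤ d) :
    (1 - symSq (diagonal fun i => (d i : ℂ))).PosDef ↔
      (1 - diagonal fun i => (d i : ℂ)).PosDef := by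
  rw [symSq_diagonal, ← diagonal_one, ← diagonal_one, diagonal_sub, diagonal_sub,
    posDef_diagonal_iff, posDef_diagonal_iff]
  simp only [Sum.forall, Sum.elim_inl, Sum.elim_inr, sub_pos]
  norm_cast
  simp only [pow_lt_one_iff_of_nonneg (hd _) two_ne_zero, and_iff_left_iff_imp]
  exact fun h p => mul_lt_one_of_nonneg_of_lt_one_left (hd _) (h _) (h _).le

end SymSq

theorem posDef_one_sub_conj_unitary_iff {n 𝕜 : Type*} [Fintype n] [DecidableEq n] [RCLike 𝕜]
    {U : Matrix n n 𝕜} (hU : U ∈ unitaryGroup n 𝕜) (M : Matrix n n 𝕜) :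
    (1 - U * M * Uᴴ).PosDef ↔ (1 - M).PosDef := by
  have hUnit : IsUnit U := Unitary.isUnit_coe (U := ⟨U, hU⟩)
  have h : 1 - U * M * Uᴴ = U * (1 - M) * star U := by
    rw [Matrix.mul_sub, Matrix.sub_mul, mul_one, ← star_eq_conjTranspose,
      Unitary.mul_star_self_of_mem hU]
  rw [h, hUnit.posDef_star_right_conjugate_iff]

section Spectral

variable {m : Type*} [Fintype m] [LinearOrder m]

theorem symSq_mem_unitaryGroup {U : Matrix m m ℂ} (hU : U ∈ unitaryGroup m ℂ) :
    symSq U ∈ unitaryGroup (m ⊕ StrictPairs m) ℂ := by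
  rw [mem_unitaryGroup_iff, star_eq_conjTranspose] at *
  rw [← symSq_conjTranspose, symSq_mul, hU, symSq_one]

theorem posDef_one_sub_symSq_iff {A : Matrix m m ℂ} (hA : A.PosSemidef) :
    (1 - symSq A).PosDef ↔ (1 - A).PosDef := by
  obtain ⟨d, hd, U, hU, rfl⟩ : ∃ d : m → ℝ, 0 ≤ d ∧
      ∃ U ∈ unitaryGroup m ℂ, A = U * diagonal (fun i => (d i : ℂ)) * Uᴴ :=
    ⟨_, hA.eigenvalues_nonneg, _, hA.1.eigenvectorUnitary.2, hA.1.spectral_theorem⟩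
  rw [← symSq_mul, ← symSq_mul, symSq_conjTranspose,
    posDef_one_sub_conj_unitary_iff (symSq_mem_unitaryGroup hU),
    posDef_one_sub_conj_unitary_iff hU]
  exact posDef_one_sub_symSq_diagonal_iff d hd

end Spectral

section Domain

variable {m n : Type*} [Fintype m] [Fintype n]

theorem norm_apply_le_one_of_mem_OmegaI [DecidableEq m] {Z : Matrix m n ℂ}
    (hZ : Z ∈ OmegaI m n) (i : m) (k : n) : ‖Z i k‖ ≤ 1 := by
  have h := (show (1 - Z * Zᴴ).PosDef from hZ).diag_pos (i := i)
  simp only [Matrix.sub_apply, one_apply_eq, mul_apply, conjTranspose_apply, RCLike.star_def,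
    Complex.mul_conj'] at h
  norm_cast at h
  have hk : ‖Z i k‖ ^ 2 ≤ ∑ j, ‖Z i j‖ ^ 2 :=
    Finset.single_le_sum (fun j _ => sq_nonneg ‖Z i j‖) (Finset.mem_univ k)
  exact (sq_le_one_iff₀ (norm_nonneg _)).1 (by linarith)

theorem OmegaI_subset_pi_closedBall [DecidableEq m] :
    OmegaI m n ⊆ Set.univ.pi fun _ : m => Set.univ.pi fun _ : n => Metric.closedBall (0 : ℂ) 1 :=
  fun _ hZ i _ k _ => mem_closedBall_zero_iff.2 (norm_apply_le_one_of_mem_OmegaI hZ i k)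

variable [LinearOrder m] [LinearOrder n]

theorem symSq_mem_OmegaI_iff {Z : Matrix m n ℂ} :
    symSq Z ∈ OmegaI (m ⊕ StrictPairs m) (n ⊕ StrictPairs n) ↔ Z ∈ OmegaI m n := by
  change (1 - symSq Z * (symSq Z)ᴴ).PosDef ↔ (1 - Z * Zᴴ).PosDef
  rw [← symSq_conjTranspose, symSq_mul]
  exact posDef_one_sub_symSq_iff (posSemidef_self_mul_conjTranspose Z)

theorem isCompact_preimage_symSq {K : Set (Matrix (m ⊕ StrictPairs m) (n ⊕ StrictPairs n) ℂ)}
    (hK : K ⊆ OmegaI _ _) (hKc : IsCompact K) : IsCompact (symSq ⁻¹' K) :=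
  have hball := isCompact_univ_pi fun _ : m => isCompact_univ_pi fun _ : n =>
    isCompact_closedBall (0 : ℂ) 1
  hball.of_isClosed_subset (hKc.isClosed.preimage continuous_symSq)
    fun _ hZ => OmegaI_subset_pi_closedBall (symSq_mem_OmegaI_iff.1 (hK hZ))

end Domain

theorem statement19_general (r s : ℕ)
    (f : Matrix (Fin r) (Fin s) ℂ →
      Matrix (Fin r ⊕ {p : Fin r × Fin r // p.1 < p.2})
             (Fin s ⊕ {q : Fin s × Fin s // q.1 < q.2}) ℂ)
    (hf1 : ∀ Z (i : Fin r) (k : Fin s), f Z (Sum.inl i) (Sum.inl k) = Z i k ^ 2)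
    (hf2 : ∀ Z (p : {p : Fin r × Fin r // p.1 < p.2}) (k : Fin s),
      f Z (Sum.inr p) (Sum.inl k) = (Real.sqrt 2 : ℂ) * (Z p.1.1 k * Z p.1.2 k))
    (hf3 : ∀ Z (i : Fin r) (q : {q : Fin s × Fin s // q.1 < q.2}),
      f Z (Sum.inl i) (Sum.inr q) = (Real.sqrt 2 : ℂ) * (Z i q.1.1 * Z i q.1.2))
    (hf4 : ∀ Z (p : {p : Fin r × Fin r // p.1 < p.2}) (q : {q : Fin s × Fin s // q.1 < q.2}),
      f Z (Sum.inr p) (Sum.inr q)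
        = Z p.1.1 q.1.1 * Z p.1.2 q.1.2 + Z p.1.2 q.1.1 * Z p.1.1 q.1.2) :
    Fintype.card (Fin r ⊕ {p : Fin r × Fin r // p.1 < p.2}) = r * (r + 1) / 2 ∧
    Fintype.card (Fin s ⊕ {q : Fin s × Fin s // q.1 < q.2}) = s * (s + 1) / 2 ∧
    (∀ Z ∈ OmegaI (Fin r) (Fin s),
      f Z ∈ OmegaI (Fin r ⊕ {p : Fin r × Fin r // p.1 < p.2})
                   (Fin s ⊕ {q : Fin s × Fin s // q.1 < q.2})) ∧
    ∀ K : Set (Matrix (Fin r ⊕ {p : Fin r × Fin r // p.1 < p.2})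
                      (Fin s ⊕ {q : Fin s × Fin s // q.1 < q.2}) ℂ),
      K ⊆ OmegaI (Fin r ⊕ {p : Fin r × Fin r // p.1 < p.2})
                 (Fin s ⊕ {q : Fin s × Fin s // q.1 < q.2}) →
      IsCompact K → IsCompact {Z | Z ∈ OmegaI (Fin r) (Fin s) ∧ f Z ∈ K} := by
  obtain rfl : f = symSq := by
    funext Z
    ext (i | p) (k | q)
    exacts [hf1 Z i k, hf3 Z i q, hf2 Z p k, hf4 Z p q]
  refine ⟨by simpa using card_sum_strictPairs (Fin r), by simpa using card_sum_strictPairs (Fin s),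
    fun Z hZ => symSq_mem_OmegaI_iff.2 hZ, fun K hK hKc => ?_⟩
  convert isCompact_preimage_symSq hK hKc using 1
  exact Set.ext fun Z => and_iff_right_of_imp fun hZ => symSq_mem_OmegaI_iff.1 (hK hZ)

/-- Index rows by `Fin r ⊕ {(i,j) | i < j}` (a type of cardinality
`r′ = r(r+1)/2`) and columns by `Fin s ⊕ {(k,l) | k < l}` (cardinality `s′ = s(s+1)/2`).
The map `f` with `f(Z)_{i,k} = z_{ik}²`, `f(Z)_{(i,j),k} = √2 z_{ik}z_{jk}`,
`f(Z)_{i,(k,l)} = √2 z_{ik}z_{il}`, `f(Z)_{(i,j),(k,l)} = z_{ik}z_{jl} + z_{jk}z_{il}`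
maps `Ω_{r,s}` into `Ω_{r′,s′}` and is proper: preimages of compact subsets of `Ω_{r′,s′}`
are compact. -/
theorem statement19 (r s : ℕ) (hr : 1 ≤ r) (hs : 1 ≤ s)
    (f : Matrix (Fin r) (Fin s) ℂ →
      Matrix (Fin r ⊕ {p : Fin r × Fin r // p.1 < p.2})
             (Fin s ⊕ {q : Fin s × Fin s // q.1 < q.2}) ℂ)
    (hf1 : ∀ Z (i : Fin r) (k : Fin s), f Z (Sum.inl i) (Sum.inl k) = Z i k ^ 2)
    (hf2 : ∀ Z (p : {p : Fin r × Fin r // p.1 < p.2}) (k : Fin s),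
      f Z (Sum.inr p) (Sum.inl k) = (Real.sqrt 2 : ℂ) * (Z p.1.1 k * Z p.1.2 k))
    (hf3 : ∀ Z (i : Fin r) (q : {q : Fin s × Fin s // q.1 < q.2}),
      f Z (Sum.inl i) (Sum.inr q) = (Real.sqrt 2 : ℂ) * (Z i q.1.1 * Z i q.1.2))
    (hf4 : ∀ Z (p : {p : Fin r × Fin r // p.1 < p.2}) (q : {q : Fin s × Fin s // q.1 < q.2}),
      f Z (Sum.inr p) (Sum.inr q)
        = Z p.1.1 q.1.1 * Z p.1.2 q.1.2 + Z p.1.2 q.1.1 * Z p.1.1 q.1.2) :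
    Fintype.card (Fin r ⊕ {p : Fin r × Fin r // p.1 < p.2}) = r * (r + 1) / 2 ∧
    Fintype.card (Fin s ⊕ {q : Fin s × Fin s // q.1 < q.2}) = s * (s + 1) / 2 ∧
    (∀ Z ∈ OmegaI (Fin r) (Fin s),
      f Z ∈ OmegaI (Fin r ⊕ {p : Fin r × Fin r // p.1 < p.2})
                   (Fin s ⊕ {q : Fin s × Fin s // q.1 < q.2})) ∧
    ∀ K : Set (Matrix (Fin r ⊕ {p : Fin r × Fin r // p.1 < p.2})
                      (Fin s ⊕ {q : Fin s × Fin s // q.1 < q.2}) ℂ),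
      K ⊆ OmegaI (Fin r ⊕ {p : Fin r × Fin r // p.1 < p.2})
                 (Fin s ⊕ {q : Fin s × Fin s // q.1 < q.2}) →
      IsCompact K → IsCompact {Z | Z ∈ OmegaI (Fin r) (Fin s) ∧ f Z ∈ K} :=
  statement19_general r s f hf1 hf2 hf3 hf4
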